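/- arXiv:2511.01239 — 2 statements merged into one kernel-verified Lean document; each statement's English description precedes it below -/
import Mathlib

section
/- Let G = (V,E) be a finite simple undirected graph on n ≥ 1 vertices with positive edge weights and unique shortest paths, and let p ∈ (0,1]. Choose a random subset L ⊆ V by including each vertex independently with probability p. Then with probability at least 1 − 1/n, the following holds simultaneously for all pairs of connected vertices u, v: if the unique shortest path π(u,v) has hop length at least ⌊(3 ln n)/p⌋, then at least one vertex of π(u,v) belongs to L. (Proposition 2.1.) -/
open scoped ENNReal

variable {V : Type*}

/-- The total weight of a walk: the sum of the weights of its edges (in `ℝ≥0∞`). -/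
noncomputable def walkWeight {G : SimpleGraph V} (wt : Sym2 V → NNReal)
    {u v : V} (p : G.Walk u v) : ℝ≥0∞ :=
  (p.edges.map (fun e => (wt e : ℝ≥0∞))).sum

/-- The weighted shortest-path distance: the infimum over all walks from `u` to `v`
of their total weight (in `ℝ≥0∞`, so it is `∞` if `u` and `v` are not connected). -/
noncomputable def wdist (G : SimpleGraph V) (wt : Sym2 V → NNReal) (u v : V) : ℝ≥0∞ :=
  ⨅ p : G.Walk u v, walkWeight wt p

/-- `G` has unique shortest paths: for every pair of connected vertices there is exactly
one walk of minimum total weight. -/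
def HasUniqueShortestPaths (G : SimpleGraph V) (wt : Sym2 V → NNReal) : Prop :=
  ∀ u v : V, G.Reachable u v →
    ∃! p : G.Walk u v, walkWeight wt p = wdist G wt u v

/-! A shortest walk is a path, since `bypass` does not increase the weight, so by uniqueness it
equals its own bypass. Hence the bad event for a pair `u, v` is contained in the event that
none of the `|π(u,v)| + 1 ≥ k + 1` distinct vertices of `π(u,v)` is a landmark, which has
probability `(1 - p) ^ (k + 1) ≤ exp (-p (k + 1)) ≤ n⁻³` for `k = ⌊3 ln n / p⌋`.
A union bound over the `n²` pairs gives failure probability at most `n⁻¹`. -/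

open SimpleGraph MeasureTheory

section ShortestPaths

variable {G : SimpleGraph V} {wt : Sym2 V → NNReal}

lemma walkWeight_bypass_le [DecidableEq V] {u v : V} (q : G.Walk u v) :
    walkWeight wt q.bypass ≤ walkWeight wt q :=
  (q.edges_bypass_sublist_edges.map _).sum_le_sum fun _ _ => zero_le

lemma wdist_le_walkWeight {u v : V} (q : G.Walk u v) : wdist G wt u v ≤ walkWeight wt q :=
  iInf_le _ q

lemma HasUniqueShortestPaths.eq_of_walkWeight_eq (huniq : HasUniqueShortestPaths G wt)
    {u v : V} {q q' : G.Walk u v} (hq : walkWeight wt q = wdist G wt u v)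
    (hq' : walkWeight wt q' = wdist G wt u v) : q = q' :=
  (huniq u v ⟨q⟩).unique hq hq'

lemma HasUniqueShortestPaths.isPath_of_walkWeight_eq (huniq : HasUniqueShortestPaths G wt)
    {u v : V} {q : G.Walk u v} (hq : walkWeight wt q = wdist G wt u v) : q.IsPath := by
  classical
  have hbypass : walkWeight wt q.bypass = wdist G wt u v :=
    le_antisymm ((walkWeight_bypass_le q).trans hq.le) (wdist_le_walkWeight _)
  rw [huniq.eq_of_walkWeight_eq hq hbypass]
  exact q.bypass_isPath

end ShortestPaths

section Bernoulli

variable [Fintype V] {a : NNReal} (ha : a ≤ 1)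

lemma measure_pi_bernoulli_forall_false (S : Finset V) :
    Measure.pi (fun _ : V => (PMF.bernoulli a ha).toMeasure) {ω | ∀ w ∈ S, ω w = false} =
      (1 - (a : ℝ≥0∞)) ^ S.card := by
  have hfalse : (PMF.bernoulli a ha).toMeasure {false} = 1 - (a : ℝ≥0∞) := by
    rw [PMF.toMeasure_apply_singleton _ _ (measurableSet_singleton _)]
    simp [PMF.bernoulli_apply]
  change Measure.pi _ ((S : Set V).pi fun _ => {false}) = _
  rw [Measure.pi_pi_finset, hfalse, Finset.prod_const]

lemma measure_pi_bernoulli_forall_false_support {G : SimpleGraph V} {u v : V}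
    {q : G.Walk u v} (hq : q.IsPath) :
    Measure.pi (fun _ : V => (PMF.bernoulli a ha).toMeasure)
        {ω | ∀ w ∈ q.support, ω w = false} = (1 - (a : ℝ≥0∞)) ^ (q.length + 1) := by
  classical
  simpa [List.toFinset_card_of_nodup hq.support_nodup] using
    measure_pi_bernoulli_forall_false ha q.support.toFinset

lemma measure_pi_bernoulli_exists_long_shortest_walk_le {G : SimpleGraph V}
    {wt : Sym2 V → NNReal} (huniq : HasUniqueShortestPaths G wt) (u v : V) (k : ℕ) :
    Measure.pi (fun _ : V => (PMF.bernoulli a ha).toMeasure)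
        {ω | ∃ q : G.Walk u v, walkWeight wt q = wdist G wt u v ∧ k ≤ q.length ∧
          ∀ w ∈ q.support, ω w = false} ≤ (1 - (a : ℝ≥0∞)) ^ (k + 1) := by
  by_cases hlong : ∃ q : G.Walk u v, walkWeight wt q = wdist G wt u v ∧ k ≤ q.length
  · obtain ⟨q₀, hq₀, hk⟩ := hlong
    calc _ ≤ Measure.pi (fun _ : V => (PMF.bernoulli a ha).toMeasure)
            {ω | ∀ w ∈ q₀.support, ω w = false} := by
          refine measure_mono ?_
          rintro ω ⟨q, hq, -, hfalse⟩
          rwa [huniq.eq_of_walkWeight_eq hq hq₀] at hfalse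
      _ = (1 - (a : ℝ≥0∞)) ^ (q₀.length + 1) :=
          measure_pi_bernoulli_forall_false_support ha (huniq.isPath_of_walkWeight_eq hq₀)
      _ ≤ _ := pow_le_pow_right_of_le_one' tsub_le_self (by omega)
  · have hempty : {ω : V → Bool | ∃ q : G.Walk u v, walkWeight wt q = wdist G wt u v ∧
        k ≤ q.length ∧ ∀ w ∈ q.support, ω w = false} = ∅ :=
      Set.eq_empty_of_forall_notMem fun _ ⟨q, hq, hk, _⟩ => hlong ⟨q, hq, hk⟩
    simp [hempty]

end Bernoulli

lemma one_sub_pow_floor_mul_log_div_add_one_le (c : ℕ) {n : ℕ} (hn : 0 < n) {p : ℝ}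
    (hp0 : 0 < p) (hp1 : p ≤ 1) :
    (1 - ENNReal.ofReal p) ^ (⌊c * Real.log n / p⌋₊ + 1) ≤ (n : ℝ≥0∞)⁻¹ ^ c := by
  set m := ⌊c * Real.log n / p⌋₊ + 1
  have hn' : (0 : ℝ) < n := by exact_mod_cast hn
  have hlog : c * Real.log n ≤ m * p := by
    have := Nat.lt_floor_add_one (c * Real.log n / p)
    rw [div_lt_iff₀ hp0] at this
    exact_mod_cast this.le
  have hreal : (1 - p) ^ m ≤ (n : ℝ)⁻¹ ^ c :=
    calc (1 - p) ^ m ≤ Real.exp (-p) ^ m :=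
          pow_le_pow_left₀ (by linarith) (Real.one_sub_le_exp_neg p) m
      _ = Real.exp (m * -p) := (Real.exp_nat_mul _ _).symm
      _ ≤ Real.exp (c * -Real.log n) := Real.exp_le_exp.mpr (by linarith)
      _ = (n : ℝ)⁻¹ ^ c := by rw [Real.exp_nat_mul, Real.exp_neg, Real.exp_log hn']
  calc (1 - ENNReal.ofReal p) ^ m = ENNReal.ofReal ((1 - p) ^ m) := by
        rw [ENNReal.ofReal_pow (by linarith), ENNReal.ofReal_sub _ hp0.le, ENNReal.ofReal_one]
    _ ≤ ENNReal.ofReal ((n : ℝ)⁻¹ ^ c) := ENNReal.ofReal_le_ofReal hreal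
    _ = (n : ℝ≥0∞)⁻¹ ^ c := by
        rw [ENNReal.ofReal_pow (by positivity), ENNReal.ofReal_inv_of_pos hn',
          ENNReal.ofReal_natCast]

lemma ENNReal.pow_mul_inv_pow_succ {x : ℝ≥0∞} (h0 : x ≠ 0) (htop : x ≠ ⊤) (k : ℕ) :
    x ^ k * x⁻¹ ^ (k + 1) = x⁻¹ := by
  rw [pow_succ, ← mul_assoc, ← mul_pow, ENNReal.mul_inv_cancel h0 htop, one_pow, one_mul]

theorem stmt2_general [Fintype V] (G : SimpleGraph V) (wt : Sym2 V → NNReal)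
    (n : ℕ) (hn : 1 ≤ n) (hcard : Fintype.card V = n)
    (huniq : HasUniqueShortestPaths G wt)
    (p : ℝ) (hp0 : 0 < p) (hp1 : p ≤ 1) :
    1 - 1 / (n : ℝ≥0∞) ≤
      (MeasureTheory.Measure.pi fun _ : V =>
          (PMF.bernoulli (Real.toNNReal p) (Real.toNNReal_le_one.mpr hp1)).toMeasure)
        {ω : V → Bool | ∀ (u v : V) (q : G.Walk u v),
          walkWeight wt q = wdist G wt u v →
          ⌊(3 * Real.log n) / p⌋₊ ≤ q.length →
          ∃ w ∈ q.support, ω w = true} := by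
  set μ := Measure.pi fun _ : V =>
    (PMF.bernoulli (Real.toNNReal p) (Real.toNNReal_le_one.mpr hp1)).toMeasure
  set k := ⌊(3 * Real.log n) / p⌋₊
  set bad : V × V → Set (V → Bool) := fun uv =>
    {ω | ∃ q : G.Walk uv.1 uv.2, walkWeight wt q = wdist G wt uv.1 uv.2 ∧ k ≤ q.length ∧
      ∀ w ∈ q.support, ω w = false}
  set good := {ω : V → Bool | ∀ (u v : V) (q : G.Walk u v),
    walkWeight wt q = wdist G wt u v → k ≤ q.length → ∃ w ∈ q.support, ω w = true}
  have hcover : goodᶜ ⊆ ⋃ uv, bad uv := by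
    intro ω hω
    simp only [good, Set.mem_compl_iff, Set.mem_ofPred_eq, not_forall, not_exists, not_and,
      Bool.not_eq_true] at hω
    obtain ⟨u, v, q, hq, hk, hfalse⟩ := hω
    exact Set.mem_iUnion.mpr ⟨(u, v), q, hq, hk, hfalse⟩
  have hbad : μ goodᶜ ≤ 1 / n :=
    calc μ goodᶜ ≤ ∑ uv, μ (bad uv) :=
          (measure_mono hcover).trans (measure_iUnion_fintype_le _ _)
      _ ≤ ∑ _uv : V × V, (n : ℝ≥0∞)⁻¹ ^ 3 := Finset.sum_le_sum fun uv _ =>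
          (measure_pi_bernoulli_exists_long_shortest_walk_le _ huniq uv.1 uv.2 k).trans
            (by exact_mod_cast one_sub_pow_floor_mul_log_div_add_one_le 3 hn hp0 hp1)
      _ = 1 / n := by
          simp only [Finset.sum_const, Finset.card_univ, Fintype.card_prod, hcard, nsmul_eq_mul,
            ← sq, Nat.cast_pow, one_div]
          exact ENNReal.pow_mul_inv_pow_succ (by exact_mod_cast (by omega : n ≠ 0))
            (ENNReal.natCast_ne_top n) 2
  calc 1 - 1 / (n : ℝ≥0∞) ≤ 1 - μ goodᶜ := tsub_le_tsub_left hbad 1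
    _ = μ good := by
        rw [prob_compl_eq_one_sub .of_discrete,
          ENNReal.sub_sub_cancel ENNReal.one_ne_top prob_le_one]

theorem stmt2 [Fintype V] [DecidableEq V] (G : SimpleGraph V) (wt : Sym2 V → NNReal)
    (hwt : ∀ e ∈ G.edgeSet, 0 < wt e)
    (n : ℕ) (hn : 1 ≤ n) (hcard : Fintype.card V = n)
    (huniq : HasUniqueShortestPaths G wt)
    (p : ℝ) (hp0 : 0 < p) (hp1 : p ≤ 1) :
    1 - 1 / (n : ℝ≥0∞) ≤
      (MeasureTheory.Measure.pi fun _ : V =>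
          (PMF.bernoulli (Real.toNNReal p) (Real.toNNReal_le_one.mpr hp1)).toMeasure)
        {ω : V → Bool | ∀ (u v : V) (q : G.Walk u v),
          walkWeight wt q = wdist G wt u v →
          ⌊(3 * Real.log n) / p⌋₊ ≤ q.length →
          ∃ w ∈ q.support, ω w = true} :=
  stmt2_general G wt n hn hcard huniq p hp0 hp1
end

section
/- Let G = (V,E) be a finite simple undirected graph with positive edge weights and unique shortest paths, let s, v, y be vertices pairwise connected in G, and let f ∈ E be an edge lying on both π(s,v) and π(s,y). Then d_{G−f}(v,y) ≤ d_G(s,v) + d_G(s,y). (This stitching bound is established and used in cases 6–8 of the proof of Lemma 4.1: since f lies on the common prefix of π(s,v) and π(s,y), the path from v up to their divergence vertex and down to y avoids f.) -/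
open scoped ENNReal

variable {V : Type*}

section Aux

variable {G : SimpleGraph V} (wt : Sym2 V → NNReal)

lemma walkWeight_cons {u w x : V} (h : G.Adj u w) (p : G.Walk w x) :
    walkWeight wt (SimpleGraph.Walk.cons h p) = (wt s(u, w) : ℝ≥0∞) + walkWeight wt p := by
  simp [walkWeight]

lemma walkWeight_append {u w x : V} (p : G.Walk u w) (q : G.Walk w x) :
    walkWeight wt (p.append q) = walkWeight wt p + walkWeight wt q := by
  simp [walkWeight, SimpleGraph.Walk.edges_append]

lemma walkWeight_reverse {u w : V} (p : G.Walk u w) :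
    walkWeight wt p.reverse = walkWeight wt p := by
  simp [walkWeight, SimpleGraph.Walk.edges_reverse, List.map_reverse, List.sum_reverse]

lemma walkWeight_ne_top {u w : V} (p : G.Walk u w) : walkWeight wt p ≠ ⊤ := by
  induction p with
  | nil => simp [walkWeight]
  | cons h q ih =>
    rw [walkWeight_cons]
    exact ENNReal.add_ne_top.2 ⟨ENNReal.coe_ne_top, ih⟩

lemma wdist_le {u w : V} (p : G.Walk u w) : wdist G wt u w ≤ walkWeight wt p :=
  iInf_le _ p

lemma walkWeight_transfer {H : SimpleGraph V} {u w : V} (p : G.Walk u w) (hp) :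
    walkWeight wt (p.transfer H hp) = walkWeight wt p := by
  simp [walkWeight, SimpleGraph.Walk.edges_transfer]

lemma wdist_le_add_walk {u x w : V} (hux : G.Reachable u x) (β : G.Walk x w) :
    wdist G wt u w ≤ wdist G wt u x + walkWeight wt β := by
  have : Nonempty (G.Walk u x) := hux
  rw [wdist, wdist, ENNReal.iInf_add]
  refine le_iInf fun q => ?_
  exact iInf_le_of_le (q.append β) (le_of_eq (walkWeight_append wt q β))

/-- Decompose a walk at the last occurrence of an edge. -/
lemma walk_decomp {u v : V} (p : G.Walk u v) (f : Sym2 V) (hf : f ∈ p.edges) :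
    ∃ (x y : V) (h : G.Adj x y) (P : G.Walk u x) (β : G.Walk y v),
      s(x, y) = f ∧
      walkWeight wt p = walkWeight wt P + (wt f : ℝ≥0∞) + walkWeight wt β ∧
      f ∉ β.edges := by
  induction p with
  | nil => simp at hf
  | @cons a b c h q ih =>
    by_cases hq : f ∈ q.edges
    · obtain ⟨x, y, h', P, β, hxy, hw, hb⟩ := ih hq
      refine ⟨x, y, h', SimpleGraph.Walk.cons h P, β, hxy, ?_, hb⟩
      rw [walkWeight_cons, walkWeight_cons, hw]
      ring
    · rw [SimpleGraph.Walk.edges_cons, List.mem_cons] at hf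
      rcases hf with hf | hf
      · subst hf
        exact ⟨a, b, h, SimpleGraph.Walk.nil, q, rfl, by
          rw [walkWeight_cons]; simp [walkWeight], hq⟩
      · exact absurd hf hq

end Aux

theorem stmt12 [Fintype V] [DecidableEq V] (G : SimpleGraph V) (wt : Sym2 V → NNReal)
    (hwt : ∀ e ∈ G.edgeSet, 0 < wt e)
    (huniq : HasUniqueShortestPaths G wt)
    (s v y : V)
    (hsv : G.Reachable s v) (hsy : G.Reachable s y) (hvy : G.Reachable v y)
    (f : Sym2 V) (hf : f ∈ G.edgeSet)
    (qsv : G.Walk s v) (hqsv : walkWeight wt qsv = wdist G wt s v)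
    (qsy : G.Walk s y) (hqsy : walkWeight wt qsy = wdist G wt s y)
    (hf1 : f ∈ qsv.edges) (hf2 : f ∈ qsy.edges) :
    wdist (G.deleteEdges {f}) wt v y ≤ wdist G wt s v + wdist G wt s y := by
  obtain ⟨x1, y1, h1, P1, β1, hxy1, hw1, hb1⟩ := walk_decomp wt qsv f hf1
  obtain ⟨x2, y2, h2, P2, β2, hxy2, hw2, hb2⟩ := walk_decomp wt qsy f hf2
  -- key equalities: wdist s x_i = weight P_i, wdist s y_i = weight P_i + wt f
  have key : ∀ (x' y' : V) (h' : G.Adj x' y') (P : G.Walk s x') (t : V) (β : G.Walk y' t)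
      (q : G.Walk s t), s(x', y') = f →
      walkWeight wt q = wdist G wt s t →
      walkWeight wt q = walkWeight wt P + (wt f : ℝ≥0∞) + walkWeight wt β →
      wdist G wt s y' = walkWeight wt P + (wt f : ℝ≥0∞) := by
    intro x' y' h' P t β q hxy hq hw
    have hPy : wdist G wt s y' ≤ walkWeight wt P + (wt f : ℝ≥0∞) := by
      have := wdist_le wt (P.append (SimpleGraph.Walk.cons h' SimpleGraph.Walk.nil))
      rw [walkWeight_append, walkWeight_cons] at this
      simpa [walkWeight, hxy] using this
    have hlow : walkWeight wt P + (wt f : ℝ≥0∞) ≤ wdist G wt s y' := by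
      have htri := wdist_le_add_walk wt (G := G) (u := s) (x := y') ⟨P.append
        (SimpleGraph.Walk.cons h' SimpleGraph.Walk.nil)⟩ β
      rw [← hq, hw] at htri
      exact (ENNReal.add_le_add_iff_right (walkWeight_ne_top wt β)).1 htri
    exact le_antisymm hPy hlow
  have k1 := key x1 y1 h1 P1 _ β1 qsv hxy1 hqsv hw1
  have k2 := key x2 y2 h2 P2 _ β2 qsy hxy2 hqsy hw2
  -- wdist s x_i = weight P_i
  have keyx : ∀ (x' y' : V) (h' : G.Adj x' y') (P : G.Walk s x') (t : V) (β : G.Walk y' t)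
      (q : G.Walk s t), s(x', y') = f →
      walkWeight wt q = wdist G wt s t →
      walkWeight wt q = walkWeight wt P + (wt f : ℝ≥0∞) + walkWeight wt β →
      wdist G wt s x' = walkWeight wt P := by
    intro x' y' h' P t β q hxy hq hw
    refine le_antisymm ?_ ?_
    · exact wdist_le wt P
    · have htri := wdist_le_add_walk wt (G := G) (u := s) (x := x') ⟨P⟩
        (SimpleGraph.Walk.cons h' β)
      rw [← hq, hw, walkWeight_cons, hxy, ← add_assoc] at htri
      exact (ENNReal.add_le_add_iff_right
        (ENNReal.add_ne_top.2 ⟨ENNReal.coe_ne_top, walkWeight_ne_top wt β⟩)).1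
        (by rwa [add_assoc, add_assoc] at htri)
  have kx1 := keyx x1 y1 h1 P1 _ β1 qsv hxy1 hqsv hw1
  have kx2 := keyx x2 y2 h2 P2 _ β2 qsy hxy2 hqsy hw2
  -- orientation agreement: y1 = y2
  have hy12 : y1 = y2 := by
    have hsym : s(x1, y1) = s(x2, y2) := hxy1.trans hxy2.symm
    rw [Sym2.eq_iff] at hsym
    rcases hsym with ⟨-, hy⟩ | ⟨hx, hy⟩
    · exact hy
    · -- x1 = y2, y1 = x2 : contradiction
      exfalso
      subst hx; subst hy
      -- wdist s y1 = wdist s x1 + wt f and wdist s x1 = wdist s y1 + wt f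
      have e1 : wdist G wt s y1 = wdist G wt s x1 + (wt f : ℝ≥0∞) := by
        rw [k1, kx1]
      have e2 : wdist G wt s x1 = wdist G wt s y1 + (wt f : ℝ≥0∞) := by
        rw [k2, kx2]
      have hne : wdist G wt s y1 ≠ ⊤ := by
        rw [k1]
        exact ENNReal.add_ne_top.2 ⟨walkWeight_ne_top wt P1, ENNReal.coe_ne_top⟩
      have hpos : (0 : ℝ≥0∞) < (wt f : ℝ≥0∞) := by
        exact_mod_cast hwt f hf
      have : wdist G wt s y1 < wdist G wt s y1 := by
        conv_rhs => rw [e1, e2]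
        calc wdist G wt s y1 < wdist G wt s y1 + (wt f + wt f : ℝ≥0∞) :=
              ENNReal.lt_add_right hne (by simp [add_pos_iff, (hwt f hf).ne'])
          _ = wdist G wt s y1 + (wt f : ℝ≥0∞) + (wt f : ℝ≥0∞) := by ring
      exact lt_irrefl _ this
  subst hy12
  -- build the walk in G - f
  have hβ1 : ∀ e ∈ β1.reverse.edges, e ∉ ({f} : Set (Sym2 V)) := by
    intro e he
    rw [SimpleGraph.Walk.edges_reverse, List.mem_reverse] at he
    simp only [Set.mem_singleton_iff]
    rintro rfl; exact hb1 he
  have hβ2 : ∀ e ∈ β2.edges, e ∉ ({f} : Set (Sym2 V)) := by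
    intro e he
    simp only [Set.mem_singleton_iff]
    rintro rfl; exact hb2 he
  set γ : (G.deleteEdges {f}).Walk v y :=
    ((β1.reverse).toDeleteEdges {f} hβ1).append (β2.toDeleteEdges {f} hβ2) with hγ
  have hwγ : walkWeight wt γ = walkWeight wt β1 + walkWeight wt β2 := by
    rw [hγ, walkWeight_append, walkWeight_transfer, walkWeight_transfer,
      walkWeight_reverse]
  calc wdist (G.deleteEdges {f}) wt v y ≤ walkWeight wt γ := wdist_le wt γ
    _ = walkWeight wt β1 + walkWeight wt β2 := hwγ
    _ ≤ wdist G wt s v + wdist G wt s y := by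
        rw [← hqsv, ← hqsy, hw1, hw2]
        exact add_le_add le_add_self le_add_self
end
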